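/- arXiv:1607.05454 — 9 statements merged into one kernel-verified Lean document; each statement's English description precedes it below -/
import Mathlib

section
/- Let q : Fin 4 × Fin 4 → ℝ be nonnegative with total sum 1 (representing the joint distribution of potential-outcome types (Y_{S=0}, Y_{S=1}, S_{T=0}, S_{T=1}) for a strong surrogate). Define ACE = q(2,2) + q(1,1) − q(1,2) − q(2,1) and γ = (q(0,1)+q(1,1)+q(2,1)+q(3,1)) − (q(0,2)+q(1,2)+q(2,2)+q(3,2)). Then ACE ≥ γ − (q(0,0)+q(0,1)+q(0,2)+q(0,3)+q(2,0)+q(2,1)+q(2,2)+q(2,3)) − (q(2,1)+q(2,3)+q(3,1)+q(3,3)), i.e., ACE(T→Y) ≥ ACE(S→Y) − P(S=0|T=1) − P(Y=1,S=1|T=0). -/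
/- Strong-surrogate potential-outcome-type model: `q (i, j)` is the proportion of the
type with `(S_{T=0}, S_{T=1})` given by the binary expansion of `i` and
`(Y_{S=0}, Y_{S=1})` given by the binary expansion of `j`. -/

/-- `P(Y=0, S=0 | T=0)` -/
noncomputable def pA (q : Fin 4 × Fin 4 → ℝ) : ℝ := q (0, 0) + q (0, 1) + q (1, 0) + q (1, 1)

/-- `P(Y=1, S=0 | T=0)` -/
noncomputable def pB (q : Fin 4 × Fin 4 → ℝ) : ℝ := q (0, 2) + q (0, 3) + q (1, 2) + q (1, 3)

/-- `P(Y=0, S=1 | T=0)` -/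
noncomputable def pC (q : Fin 4 × Fin 4 → ℝ) : ℝ := q (2, 0) + q (2, 2) + q (3, 0) + q (3, 2)

/-- `P(Y=1, S=1 | T=0)` -/
noncomputable def pD (q : Fin 4 × Fin 4 → ℝ) : ℝ := q (2, 1) + q (2, 3) + q (3, 1) + q (3, 3)

/-- `P(S=0 | T=1)` -/
noncomputable def pE (q : Fin 4 × Fin 4 → ℝ) : ℝ :=
  q (0, 0) + q (0, 1) + q (0, 2) + q (0, 3) + q (2, 0) + q (2, 1) + q (2, 2) + q (2, 3)

/-- `γ = ACE(S → Y)` -/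
noncomputable def gam (q : Fin 4 × Fin 4 → ℝ) : ℝ :=
  (q (0, 1) + q (1, 1) + q (2, 1) + q (3, 1)) - (q (0, 2) + q (1, 2) + q (2, 2) + q (3, 2))

/-- `ACE(T → Y)` -/
noncomputable def ace (q : Fin 4 × Fin 4 → ℝ) : ℝ := q (2, 2) + q (1, 1) - q (1, 2) - q (2, 1)

theorem ace_sub_lower_bound_eq (q : Fin 4 × Fin 4 → ℝ) :
    ace q - (gam q - pE q - pD q) =
      q (0, 0) + 2 * q (0, 2) + q (0, 3) + q (2, 0) + 3 * q (2, 2) + 2 * q (2, 3) + q (3, 2) +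
        q (3, 3) := by
  unfold ace gam pE pD
  ring

theorem stmt0_general (q : Fin 4 × Fin 4 → ℝ) (hq : ∀ p, 0 ≤ q p) :
    ace q ≥ gam q - pE q - pD q := by
  have hslack := ace_sub_lower_bound_eq q
  linarith [hq (0, 0), hq (0, 2), hq (0, 3), hq (2, 0), hq (2, 2), hq (2, 3), hq (3, 2), hq (3, 3)]

theorem stmt0 (q : Fin 4 × Fin 4 → ℝ) (hq : ∀ p, 0 ≤ q p)
    (hsum : ∑ p : Fin 4 × Fin 4, q p = 1) :
    ace q ≥ gam q - pE q - pD q :=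
  stmt0_general q hq
end

section
/- Let q : Fin 4 × Fin 4 → ℝ be nonnegative with total sum 1. With ACE = q(2,2)+q(1,1)−q(1,2)−q(2,1), γ = (q(0,1)+q(1,1)+q(2,1)+q(3,1)) − (q(0,2)+q(1,2)+q(2,2)+q(3,2)), d = q(2,1)+q(2,3)+q(3,1)+q(3,3) (= P(Y=1,S=1|T=0)) and a = q(0,0)+q(0,1)+q(1,0)+q(1,1) (= P(Y=0,S=0|T=0)), one has ACE ≥ γ − 2d − a. -/
theorem ace_sub_gam_add_two_pD_add_pA (q : Fin 4 × Fin 4 → ℝ) :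
    ace q - gam q + 2 * pD q + pA q =
      q (0, 0) + q (1, 0) + q (1, 1) + q (0, 2) + 2 * q (2, 2) + q (3, 2) + q (3, 1)
        + 2 * q (2, 3) + 2 * q (3, 3) := by
  simp only [ace, gam, pD, pA]
  ring

theorem stmt1_general (q : Fin 4 × Fin 4 → ℝ) (hq : ∀ p, 0 ≤ q p) :
    ace q ≥ gam q - 2 * pD q - pA q := by
  linarith [ace_sub_gam_add_two_pD_add_pA q, hq (0, 0), hq (1, 0), hq (1, 1), hq (0, 2),
    hq (2, 2), hq (3, 2), hq (3, 1), hq (2, 3), hq (3, 3)]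

theorem stmt1 (q : Fin 4 × Fin 4 → ℝ) (hq : ∀ p, 0 ≤ q p)
    (hsum : ∑ p : Fin 4 × Fin 4, q p = 1) :
    ace q ≥ gam q - 2 * pD q - pA q :=
  stmt1_general q hq
end

section
/- Let q : Fin 4 × Fin 4 → ℝ be nonnegative with total sum 1. Define ACE = q(2,2)+q(1,1)−q(1,2)−q(2,1), γ = (q(0,1)+q(1,1)+q(2,1)+q(3,1)) − (q(0,2)+q(1,2)+q(2,2)+q(3,2)), a = q(0,0)+q(0,1)+q(1,0)+q(1,1), d = q(2,1)+q(2,3)+q(3,1)+q(3,3), and e = Σ_i (q(i,0)+q(i,2)). If γ > min(2d + a, e + d), then ACE > 0. -/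
/-!
In terms of the sixteen type proportions, `2 d + a - γ` and `ACE - (γ - (e + d))` are
combinations with nonnegative coefficients. So `γ > 2 d + a` never happens, and `γ > e + d`
forces `ACE > 0`.
-/

theorem two_mul_pD_add_pA_eq_gam_add (q : Fin 4 × Fin 4 → ℝ) :
    2 * pD q + pA q = gam q + (q (0, 0) + q (0, 2) + q (1, 0) + q (1, 2) + q (2, 1)
      + q (2, 2) + 2 * q (2, 3) + q (3, 1) + q (3, 2) + 2 * q (3, 3)) := by
  unfold pD pA gam
  ring

theorem ace_eq_gam_sub_pE_add_pD_add (q : Fin 4 × Fin 4 → ℝ) :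
    ace q = gam q - (pE q + pD q) + (q (0, 0) + 2 * q (0, 2) + q (0, 3) + q (2, 0)
      + 3 * q (2, 2) + 2 * q (2, 3) + q (3, 2) + q (3, 3)) := by
  unfold ace gam pE pD
  ring

theorem gam_le_two_mul_pD_add_pA (q : Fin 4 × Fin 4 → ℝ) (hq : ∀ p, 0 ≤ q p) :
    gam q ≤ 2 * pD q + pA q := by
  rw [two_mul_pD_add_pA_eq_gam_add]
  linarith [hq (0, 0), hq (0, 2), hq (1, 0), hq (1, 2), hq (2, 1), hq (2, 2), hq (2, 3),
    hq (3, 1), hq (3, 2), hq (3, 3)]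

theorem ace_pos_of_pE_add_pD_lt_gam (q : Fin 4 × Fin 4 → ℝ) (hq : ∀ p, 0 ≤ q p)
    (h : pE q + pD q < gam q) : 0 < ace q := by
  rw [ace_eq_gam_sub_pE_add_pD_add]
  linarith [hq (0, 0), hq (0, 2), hq (0, 3), hq (2, 0), hq (2, 2), hq (2, 3), hq (3, 2),
    hq (3, 3)]

theorem stmt4_general (q : Fin 4 × Fin 4 → ℝ) (hq : ∀ p, 0 ≤ q p)
    (hcrit : gam q > min (2 * pD q + pA q) (pE q + pD q)) :
    ace q > 0 := by
  rcases min_lt_iff.mp hcrit with h | h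
  · exact absurd h (gam_le_two_mul_pD_add_pA q hq).not_gt
  · exact ace_pos_of_pE_add_pD_lt_gam q hq h

theorem stmt4 (q : Fin 4 × Fin 4 → ℝ) (hq : ∀ p, 0 ≤ q p)
    (hsum : ∑ p : Fin 4 × Fin 4, q p = 1)
    (hcrit : gam q > min (2 * pD q + pA q) (pE q + pD q)) :
    ace q > 0 :=
  stmt4_general q hq hcrit
end

section
/- There exist two nonnegative functions q, q' : Fin 4 × Fin 4 → ℝ, each summing to 1, which induce the same observed quantities P(Y=0,S=0|T=0), P(Y=1,S=0|T=0), P(Y=0,S=1|T=0), P(S=0|T=1), and the same γ = ACE(S→Y) = 0.2 > 0, but such that ACE(T→Y) computed from q equals 0.14 > 0 while ACE(T→Y) computed from q' equals −0.10 < 0. -/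
/-!
`ACE(T → Y)` is not identified by the observed distribution together with `γ`: adding `c` to the
types `(1, 0)`, `(3, 1)` and removing it from `(1, 1)`, `(3, 3)` keeps every observed quantity,
the total mass and `γ`, but lowers `ACE(T → Y)` by `c`. Starting from a distribution with
`ACE(T → Y) = 0.14` and shifting `c = 0.24` gives `ACE(T → Y) = -0.10`.
-/

def massShift : Fin 4 × Fin 4 → ℝ :=
  fun p => !![0, 0, 0, 0; 1, -1, 0, 0; 0, 0, 0, 0; 0, 1, 0, -1] p.1 p.2

section Shift

variable (q : Fin 4 × Fin 4 → ℝ) (c : ℝ)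

lemma pA_add_smul_massShift : pA (q + c • massShift) = pA q := by
  simp [pA, massShift]; ring

lemma pB_add_smul_massShift : pB (q + c • massShift) = pB q := by
  simp [pB, massShift]

lemma pC_add_smul_massShift : pC (q + c • massShift) = pC q := by
  simp [pC, massShift]

lemma pD_add_smul_massShift : pD (q + c • massShift) = pD q := by
  simp [pD, massShift]; ring

lemma pE_add_smul_massShift : pE (q + c • massShift) = pE q := by
  simp [pE, massShift]

lemma gam_add_smul_massShift : gam (q + c • massShift) = gam q := by
  simp [gam, massShift]; ring

lemma ace_add_smul_massShift : ace (q + c • massShift) = ace q - c := by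
  simp [ace, massShift]; ring

lemma sum_add_smul_massShift : ∑ p, (q + c • massShift) p = ∑ p, q p := by
  simp [Finset.sum_add_distrib, ← Finset.mul_sum, Fintype.sum_prod_type, Fin.sum_univ_four,
    massShift]

lemma add_smul_massShift_nonneg (hq : ∀ p, 0 ≤ q p) (hc : 0 ≤ c) (h₁ : c ≤ q (1, 1))
    (h₃ : c ≤ q (3, 3)) (p) : 0 ≤ (q + c • massShift) p := by
  have hp := hq p
  obtain ⟨i, j⟩ := p
  fin_cases i <;> fin_cases j <;> simp [massShift] at hp ⊢ <;> linarith

end Shift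

def exampleTypeDist : Fin 4 × Fin 4 → ℝ :=
  fun p => !![0.36, 0, 0, 0; 0, 0.24, 0.10, 0; 0, 0, 0, 0; 0, 0.06, 0, 0.24] p.1 p.2

lemma exampleTypeDist_nonneg (p) : 0 ≤ exampleTypeDist p := by
  obtain ⟨i, j⟩ := p
  fin_cases i <;> fin_cases j <;> norm_num [exampleTypeDist]

lemma sum_exampleTypeDist : ∑ p, exampleTypeDist p = 1 := by
  simp [exampleTypeDist, Fintype.sum_prod_type, Fin.sum_univ_four]; norm_num

lemma gam_exampleTypeDist : gam exampleTypeDist = 0.2 := by simp [gam, exampleTypeDist]; norm_num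

lemma ace_exampleTypeDist : ace exampleTypeDist = 0.14 := by simp [ace, exampleTypeDist]; norm_num

theorem stmt5 :
    ∃ q q' : Fin 4 × Fin 4 → ℝ,
      (∀ p, 0 ≤ q p) ∧ (∀ p, 0 ≤ q' p) ∧
      (∑ p : Fin 4 × Fin 4, q p = 1) ∧ (∑ p : Fin 4 × Fin 4, q' p = 1) ∧
      pA q = pA q' ∧ pB q = pB q' ∧ pC q = pC q' ∧ pD q = pD q' ∧ pE q = pE q' ∧
      gam q = 0.2 ∧ gam q' = 0.2 ∧ (0.2 : ℝ) > 0 ∧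
      ace q = 0.14 ∧ ace q' = -0.10 := by
  refine ⟨exampleTypeDist, exampleTypeDist + (0.24 : ℝ) • massShift, exampleTypeDist_nonneg,
    add_smul_massShift_nonneg _ _ exampleTypeDist_nonneg (by norm_num)
      (by simp [exampleTypeDist]) (by simp [exampleTypeDist]),
    sum_exampleTypeDist, by rw [sum_add_smul_massShift, sum_exampleTypeDist],
    (pA_add_smul_massShift _ _).symm, (pB_add_smul_massShift _ _).symm,
    (pC_add_smul_massShift _ _).symm, (pD_add_smul_massShift _ _).symm,
    (pE_add_smul_massShift _ _).symm, gam_exampleTypeDist,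
    by rw [gam_add_smul_massShift, gam_exampleTypeDist], by norm_num, ace_exampleTypeDist,
    by rw [ace_add_smul_massShift, ace_exampleTypeDist]; norm_num⟩
end

section
/- Let q : Fin 16 × Fin 4 → ℝ be nonnegative with total sum 1 (proportions of the 64 potential-outcome types (Y_{00},Y_{01},Y_{10},Y_{11},S_0,S_1) in the non-strong surrogate case). Define γ₁ = Σ_j Σ_{i: Y_{11}(i)=1, Y_{10}(i)=0} q(i,j) − Σ_j Σ_{i: Y_{10}(i)=1, Y_{11}(i)=0} q(i,j), ACE = P(Y_{1,S_1}=1) − P(Y_{0,S_0}=1) expressed as the corresponding linear combination of q, pY = P(Y_{0,S_0}=1) (= P(Y=1|T=0)), and e = P(S_1=0) (= P(S=0|T=1)). Then max(−pY, −γ₁ − pY − (1−e), γ₁ − pY − e) ≤ ACE ≤ min(1−pY, −γ₁ + (1−pY) + (1−e), γ₁ + (1−pY) + e). -/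
/- Non-strong surrogate potential-outcome-type model: `q (i, j)` is the proportion of the
type with `(Y₀₀, Y₀₁, Y₁₀, Y₁₁)` given by the binary expansion of `i` (most significant
bit first) and `(S₀, S₁)` given by the binary expansion of `j`. -/

/-- Indicator of `Y₀₀ = 1` for type `i`. -/
def y00 (i : Fin 16) : ℝ := if i.val / 8 = 1 then 1 else 0
/-- Indicator of `Y₀₁ = 1` for type `i`. -/
def y01 (i : Fin 16) : ℝ := if i.val / 4 % 2 = 1 then 1 else 0
/-- Indicator of `Y₁₀ = 1` for type `i`. -/
def y10 (i : Fin 16) : ℝ := if i.val / 2 % 2 = 1 then 1 else 0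
/-- Indicator of `Y₁₁ = 1` for type `i`. -/
def y11 (i : Fin 16) : ℝ := if i.val % 2 = 1 then 1 else 0
/-- Indicator of `S₀ = 1` for type `j`. -/
def s0 (j : Fin 4) : ℝ := if j.val / 2 = 1 then 1 else 0
/-- Indicator of `S₁ = 1` for type `j`. -/
def s1 (j : Fin 4) : ℝ := if j.val % 2 = 1 then 1 else 0

/-- `γ₁ = P(Y₁₁ = 1) - P(Y₁₀ = 1)`, the effect of `S` on `Y` under `T = 1`. -/
noncomputable def gamma1 (q : Fin 16 × Fin 4 → ℝ) : ℝ :=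
  ∑ i : Fin 16, ∑ j : Fin 4, (y11 i - y10 i) * q (i, j)

/-- `P(Y=1 | T=0) = P(Y_{0,S₀} = 1)`. -/
noncomputable def pY0 (q : Fin 16 × Fin 4 → ℝ) : ℝ :=
  ∑ i : Fin 16, ∑ j : Fin 4, ((1 - s0 j) * y00 i + s0 j * y01 i) * q (i, j)

/-- `P(Y=1 | T=1) = P(Y_{1,S₁} = 1)`. -/
noncomputable def pY1 (q : Fin 16 × Fin 4 → ℝ) : ℝ :=
  ∑ i : Fin 16, ∑ j : Fin 4, ((1 - s1 j) * y10 i + s1 j * y11 i) * q (i, j)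

/-- `ACE(T → Y)`. -/
noncomputable def aceTY (q : Fin 16 × Fin 4 → ℝ) : ℝ := pY1 q - pY0 q

/-- `P(S=0 | T=1) = P(S₁ = 0)`. -/
noncomputable def pS0T1 (q : Fin 16 × Fin 4 → ℝ) : ℝ :=
  ∑ i : Fin 16, ∑ j : Fin 4, (1 - s1 j) * q (i, j)

/-- `ACE(T → S) = P(S₁ = 1) - P(S₀ = 1)`. -/
noncomputable def aceTS (q : Fin 16 × Fin 4 → ℝ) : ℝ :=
  ∑ i : Fin 16, ∑ j : Fin 4, (s1 j - s0 j) * q (i, j)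

/-
Each of `pY1`, `γ₁`, `P(S₁ = 0)` and the total mass is a `q`-weighted sum of a quantity
attached to each potential-outcome type, and `pY1` weights `(1 - S₁) Y₁₀ + S₁ Y₁₁`, a convex
combination of `Y₁₀, Y₁₁ ∈ [0, 1]`. Each of the six bounds on `ACE = pY1 - pY0` is therefore a
pointwise inequality between indicators, summed against the nonnegative weights `q`.
-/

section WeightedSum

variable {α β : Type*} [Fintype α] [Fintype β] (q : α × β → ℝ)

def weightedSum (f : α → β → ℝ) : ℝ := ∑ i, ∑ j, f i j * q (i, j)

lemma weightedSum_add (f g : α → β → ℝ) :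
    weightedSum q (fun i j => f i j + g i j) = weightedSum q f + weightedSum q g := by
  simp only [weightedSum, add_mul, Finset.sum_add_distrib]

lemma weightedSum_sub (f g : α → β → ℝ) :
    weightedSum q (fun i j => f i j - g i j) = weightedSum q f - weightedSum q g := by
  simp only [weightedSum, sub_mul, Finset.sum_sub_distrib]

lemma weightedSum_zero : weightedSum q (fun _ _ => 0) = 0 := by
  simp only [weightedSum, zero_mul, Finset.sum_const_zero]

lemma weightedSum_one {q : α × β → ℝ} (hsum : ∑ p, q p = 1) :
    weightedSum q (fun _ _ => 1) = 1 := by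
  simpa only [weightedSum, one_mul, Fintype.sum_prod_type] using hsum

lemma weightedSum_mono {q : α × β → ℝ} (hq : ∀ p, 0 ≤ q p) {f g : α → β → ℝ}
    (hfg : ∀ i j, f i j ≤ g i j) : weightedSum q f ≤ weightedSum q g :=
  Finset.sum_le_sum fun i _ => Finset.sum_le_sum fun j _ =>
    mul_le_mul_of_nonneg_right (hfg i j) (hq (i, j))

end WeightedSum

lemma ite_one_zero_mem_Icc (p : Prop) [Decidable p] :
    (if p then (1 : ℝ) else 0) ∈ Set.Icc 0 1 := by
  split_ifs <;> simp

lemma y10_y11_s1_mem_Icc (i : Fin 16) (j : Fin 4) :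
    y10 i ∈ Set.Icc 0 1 ∧ y11 i ∈ Set.Icc 0 1 ∧ s1 j ∈ Set.Icc 0 1 :=
  ⟨ite_one_zero_mem_Icc _, ite_one_zero_mem_Icc _, ite_one_zero_mem_Icc _⟩

section BoundsOnPY1

variable {q : Fin 16 × Fin 4 → ℝ}

lemma gamma1_eq_weightedSum : gamma1 q = weightedSum q fun i _ => y11 i - y10 i := rfl

lemma pS0T1_eq_weightedSum : pS0T1 q = weightedSum q fun _ j => 1 - s1 j := rfl

lemma pY1_nonneg (hq : ∀ p, 0 ≤ q p) : 0 ≤ pY1 q := by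
  refine (weightedSum_zero q).symm.trans_le (weightedSum_mono hq fun i j => ?_)
  obtain ⟨⟨_, _⟩, ⟨_, _⟩, ⟨_, _⟩⟩ := y10_y11_s1_mem_Icc i j
  nlinarith

lemma pY1_le_one (hq : ∀ p, 0 ≤ q p) (hsum : ∑ p, q p = 1) : pY1 q ≤ 1 := by
  refine (weightedSum_mono hq fun i j => ?_).trans_eq (weightedSum_one hsum)
  obtain ⟨⟨_, _⟩, ⟨_, _⟩, ⟨_, _⟩⟩ := y10_y11_s1_mem_Icc i j
  nlinarith

lemma gamma1_sub_pS0T1_le_pY1 (hq : ∀ p, 0 ≤ q p) : gamma1 q - pS0T1 q ≤ pY1 q := by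
  calc gamma1 q - pS0T1 q = weightedSum q fun i j => (y11 i - y10 i) - (1 - s1 j) :=
        (weightedSum_sub q _ _).symm
    _ ≤ pY1 q := weightedSum_mono hq fun i j => by
        obtain ⟨⟨_, _⟩, ⟨_, _⟩, ⟨_, _⟩⟩ := y10_y11_s1_mem_Icc i j
        nlinarith

lemma neg_gamma1_sub_le_pY1 (hq : ∀ p, 0 ≤ q p) (hsum : ∑ p, q p = 1) :
    -gamma1 q - (1 - pS0T1 q) ≤ pY1 q := by
  calc -gamma1 q - (1 - pS0T1 q) = weightedSum q fun i j => (y10 i - y11 i) - s1 j := by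
        simp only [gamma1_eq_weightedSum, pS0T1_eq_weightedSum, weightedSum_sub,
          weightedSum_one hsum]
        ring
    _ ≤ pY1 q := weightedSum_mono hq fun i j => by
        obtain ⟨⟨_, _⟩, ⟨_, _⟩, ⟨_, _⟩⟩ := y10_y11_s1_mem_Icc i j
        nlinarith

lemma pY1_le_gamma1_add (hq : ∀ p, 0 ≤ q p) (hsum : ∑ p, q p = 1) :
    pY1 q ≤ gamma1 q + 1 + pS0T1 q := by
  calc pY1 q ≤ weightedSum q fun i j => (y11 i - y10 i) + 1 + (1 - s1 j) :=
        weightedSum_mono hq fun i j => by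
          obtain ⟨⟨_, _⟩, ⟨_, _⟩, ⟨_, _⟩⟩ := y10_y11_s1_mem_Icc i j
          nlinarith
    _ = gamma1 q + 1 + pS0T1 q := by
        simp only [gamma1_eq_weightedSum, pS0T1_eq_weightedSum, weightedSum_add,
          weightedSum_one hsum]

lemma pY1_le_neg_gamma1_add (hq : ∀ p, 0 ≤ q p) (hsum : ∑ p, q p = 1) :
    pY1 q ≤ -gamma1 q + 1 + (1 - pS0T1 q) := by
  calc pY1 q ≤ weightedSum q fun i j => (y10 i - y11 i) + 1 + s1 j :=
        weightedSum_mono hq fun i j => by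
          obtain ⟨⟨_, _⟩, ⟨_, _⟩, ⟨_, _⟩⟩ := y10_y11_s1_mem_Icc i j
          nlinarith
    _ = -gamma1 q + 1 + (1 - pS0T1 q) := by
        simp only [gamma1_eq_weightedSum, pS0T1_eq_weightedSum, weightedSum_add,
          weightedSum_sub, weightedSum_one hsum]
        ring

end BoundsOnPY1

theorem stmt6 (q : Fin 16 × Fin 4 → ℝ) (hq : ∀ p, 0 ≤ q p)
    (hsum : ∑ p : Fin 16 × Fin 4, q p = 1) :
    max (max (-pY0 q) (-gamma1 q - pY0 q - (1 - pS0T1 q))) (gamma1 q - pY0 q - pS0T1 q)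
      ≤ aceTY q ∧
    aceTY q ≤
      min (min (1 - pY0 q) (-gamma1 q + (1 - pY0 q) + (1 - pS0T1 q)))
        (gamma1 q + (1 - pY0 q) + pS0T1 q) := by
  rw [aceTY]
  refine ⟨max_le (max_le ?_ ?_) ?_, le_min (le_min ?_ ?_) ?_⟩ <;>
    linarith [pY1_nonneg hq, neg_gamma1_sub_le_pY1 hq hsum, gamma1_sub_pS0T1_le_pY1 hq,
      pY1_le_one hq hsum, pY1_le_neg_gamma1_add hq hsum, pY1_le_gamma1_add hq hsum]
end

section
/- Let q : Fin 4 × Fin 4 → ℝ be nonnegative with total sum 1 in the strong surrogate type model, with γ, a = P(Y=0,S=0|T=0), d = P(Y=1,S=1|T=0), e = P(S=0|T=1), and ACE = ACE(T→Y) defined as linear functionals of q as usual. If γ = (1 + a + d)/2 and additionally the lower bound L₇ = γ − e − d equals the upper bound U₇ = −γ + a + (1−e), then ACE = γ − e − d exactly; in particular, when L₇ = U₇ the average causal effect ACE(T→Y) is point identified from the observed data. -/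
/-!
Writing `1 = ∑ q`, the slack `1 + pA q + pD q - 2 * gam q` becomes a combination of the type
proportions with nonnegative weights, vanishing exactly on the types with `Y_{S=0} = 0`,
`Y_{S=1} = 1`. So `gam q = (1 + pA q + pD q) / 2` forces all other types to be empty, and on
those types both `ace q` and `gam q - pE q - pD q` equal `q (1, 1) - q (2, 1)`.
-/

def gamSlackWeight (p : Fin 4 × Fin 4) : ℝ :=
  ![![2, 0, 3, 1], ![2, 0, 3, 1], ![1, 0, 3, 2], ![1, 0, 3, 2]] p.1 p.2

lemma gamSlackWeight_nonneg (p : Fin 4 × Fin 4) : 0 ≤ gamSlackWeight p := by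
  obtain ⟨i, j⟩ := p
  fin_cases i <;> fin_cases j <;> norm_num [gamSlackWeight]

lemma gamSlackWeight_ne_zero {p : Fin 4 × Fin 4} (hp : p.2 ≠ 1) : gamSlackWeight p ≠ 0 := by
  obtain ⟨i, j⟩ := p
  fin_cases i <;> fin_cases j <;> simp_all [gamSlackWeight]

lemma one_add_pA_add_pD_sub_two_mul_gam (q : Fin 4 × Fin 4 → ℝ)
    (hsum : ∑ p : Fin 4 × Fin 4, q p = 1) :
    1 + pA q + pD q - 2 * gam q = ∑ p, gamSlackWeight p * q p := by
  simp only [Fintype.sum_prod_type, Fin.sum_univ_four] at hsum ⊢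
  simp only [pA, pD, gam, gamSlackWeight, Fin.isValue, Matrix.cons_val', Matrix.cons_val_zero,
    Matrix.cons_val_fin_one, Matrix.cons_val_one, Matrix.cons_val, zero_mul, add_zero, one_mul]
  linarith

lemma eq_zero_of_gam_eq (q : Fin 4 × Fin 4 → ℝ) (hq : ∀ p, 0 ≤ q p)
    (hsum : ∑ p : Fin 4 × Fin 4, q p = 1) (hγ : gam q = (1 + pA q + pD q) / 2)
    {p : Fin 4 × Fin 4} (hp : p.2 ≠ 1) : q p = 0 := by
  have hslack : ∑ p, gamSlackWeight p * q p = 0 := by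
    rw [← one_add_pA_add_pD_sub_two_mul_gam q hsum]
    linarith
  have hterm : gamSlackWeight p * q p = 0 :=
    (Finset.sum_eq_zero_iff_of_nonneg fun p _ => mul_nonneg (gamSlackWeight_nonneg p) (hq p)).1
      hslack p (Finset.mem_univ p)
  exact (mul_eq_zero.1 hterm).resolve_left (gamSlackWeight_ne_zero hp)

lemma ace_eq_gam_sub_pE_sub_pD_of_eq_zero (q : Fin 4 × Fin 4 → ℝ)
    (hq : ∀ p : Fin 4 × Fin 4, p.2 ≠ 1 → q p = 0) : ace q = gam q - pE q - pD q := by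
  have h (i j : Fin 4) (hj : j ≠ 1) : q (i, j) = 0 := hq (i, j) hj
  simp only [ace, gam, pE, pD, Fin.isValue, ne_eq, Fin.reduceEq, zero_ne_one, not_false_eq_true,
    h, zero_add, sub_zero, add_zero]
  ring

theorem stmt12_general (q : Fin 4 × Fin 4 → ℝ) (hq : ∀ p, 0 ≤ q p)
    (hsum : ∑ p : Fin 4 × Fin 4, q p = 1)
    (hγ : gam q = (1 + pA q + pD q) / 2) :
    ace q = gam q - pE q - pD q :=
  ace_eq_gam_sub_pE_sub_pD_of_eq_zero q fun _ hp => eq_zero_of_gam_eq q hq hsum hγ hp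

theorem stmt12 (q : Fin 4 × Fin 4 → ℝ) (hq : ∀ p, 0 ≤ q p)
    (hsum : ∑ p : Fin 4 × Fin 4, q p = 1)
    (hγ : gam q = (1 + pA q + pD q) / 2)
    (hLU : gam q - pE q - pD q = -gam q + pA q + (1 - pE q)) :
    ace q = gam q - pE q - pD q :=
  stmt12_general q hq hsum hγ
end

section
/- (Charnes–Cooper transformation) Let A be an m×n real matrix, β ∈ ℝ^m, γ ∈ ℝ^n, α ∈ ℝ^n, a, b ∈ ℝ. Consider F = { x ∈ ℝ^n : A x ≤ β, αᵀx + b > 0, x ≥ 0 } and G = { (y,t) ∈ ℝ^n × ℝ : A y − β t ≤ 0, αᵀy + b t = 1, y ≥ 0, t > 0 }. Then sup over F of (γᵀx + a)/(αᵀx + b) equals sup over G of (γᵀy + a t), where the map x ↦ (x/(αᵀx+b), 1/(αᵀx+b)) is a bijection from F onto G with inverse (y,t) ↦ y/t. -/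
/-!
On the feasible region `αᵀx + b > 0` the scaling `t = 1/(αᵀx + b)`, `y = t x` turns the
fractional objective `(γᵀx + a)/(αᵀx + b)` into the linear one `γᵀy + a t` and the constraints
`Ax ≤ β`, `x ≥ 0` into the homogeneous ones `Ay ≤ tβ`, `y ≥ 0`, while `αᵀy + b t = 1` records the
normalisation. Since `(y, t) ↦ y/t` undoes the scaling, the two programs range over the same
objective values, hence have the same supremum.
-/

open Matrix

namespace CharnesCooper

variable {𝕜 ι κ : Type*} [Field 𝕜] [Fintype ι]

def transform (α : ι → 𝕜) (b : 𝕜) (x : ι → 𝕜) : (ι → 𝕜) × 𝕜 :=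
  ((α ⬝ᵥ x + b)⁻¹ • x, (α ⬝ᵥ x + b)⁻¹)

def transformInv (p : (ι → 𝕜) × 𝕜) : ι → 𝕜 :=
  p.2⁻¹ • p.1

theorem dotProduct_inv_smul_add {α y : ι → 𝕜} {b t : 𝕜} (ht : t ≠ 0)
    (h : α ⬝ᵥ y + b * t = 1) : α ⬝ᵥ (t⁻¹ • y) + b = t⁻¹ := by
  rw [dotProduct_smul, smul_eq_mul]
  field_simp
  linear_combination h

theorem div_eq_dotProduct_transform (γ α x : ι → 𝕜) (a b : 𝕜) (hx : α ⬝ᵥ x + b ≠ 0) :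
    (γ ⬝ᵥ x + a) / (α ⬝ᵥ x + b) = γ ⬝ᵥ (transform α b x).1 + a * (transform α b x).2 := by
  simp only [transform, dotProduct_smul, smul_eq_mul]
  field_simp

variable [LinearOrder 𝕜]

def fractionalFeasible (A : Matrix κ ι 𝕜) (β : κ → 𝕜) (α : ι → 𝕜) (b : 𝕜) : Set (ι → 𝕜) :=
  {x | A *ᵥ x ≤ β ∧ 0 < α ⬝ᵥ x + b ∧ 0 ≤ x}

def linearFeasible (A : Matrix κ ι 𝕜) (β : κ → 𝕜) (α : ι → 𝕜) (b : 𝕜) : Set ((ι → 𝕜) × 𝕜) :=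
  {p | A *ᵥ p.1 ≤ p.2 • β ∧ α ⬝ᵥ p.1 + b * p.2 = 1 ∧ 0 ≤ p.1 ∧ 0 < p.2}

variable (A : Matrix κ ι 𝕜) (β : κ → 𝕜) (α : ι → 𝕜) (b : 𝕜)

theorem invOn_transform :
    Set.InvOn transformInv (transform α b) (fractionalFeasible A β α b)
      (linearFeasible A β α b) := by
  constructor
  · rintro x ⟨-, hpos, -⟩
    exact inv_smul_smul₀ (inv_ne_zero hpos.ne') x
  · rintro ⟨y, t⟩ ⟨-, hnorm, -, ht⟩
    simp only [transform, transformInv, dotProduct_inv_smul_add ht.ne' hnorm, inv_inv,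
      smul_inv_smul₀ ht.ne']

variable [IsStrictOrderedRing 𝕜]

theorem mapsTo_transform :
    Set.MapsTo (transform α b) (fractionalFeasible A β α b) (linearFeasible A β α b) := by
  rintro x ⟨hAx, hpos, hx⟩
  have ht : 0 < (α ⬝ᵥ x + b)⁻¹ := inv_pos.mpr hpos
  refine ⟨?_, ?_, smul_nonneg ht.le hx, ht⟩
  · simpa only [transform, mulVec_smul] using smul_le_smul_of_nonneg_left hAx ht.le
  · simp only [transform, dotProduct_smul, smul_eq_mul]
    field_simp

theorem mapsTo_transformInv :
    Set.MapsTo transformInv (linearFeasible A β α b) (fractionalFeasible A β α b) := by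
  rintro ⟨y, t⟩ ⟨hAy, hnorm, hy, ht⟩
  have ht' : 0 ≤ t⁻¹ := inv_nonneg.mpr ht.le
  refine ⟨?_, ?_, smul_nonneg ht' hy⟩
  · calc A *ᵥ (t⁻¹ • y) = t⁻¹ • A *ᵥ y := mulVec_smul A t⁻¹ y
      _ ≤ t⁻¹ • t • β := smul_le_smul_of_nonneg_left hAy ht'
      _ = β := inv_smul_smul₀ ht.ne' β
  · rw [transformInv, dotProduct_inv_smul_add ht.ne' hnorm]
    exact inv_pos.mpr ht

theorem bijOn_transform :
    Set.BijOn (transform α b) (fractionalFeasible A β α b) (linearFeasible A β α b) :=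
  (invOn_transform A β α b).bijOn (mapsTo_transform A β α b) (mapsTo_transformInv A β α b)

end CharnesCooper

open CharnesCooper in
/-- The Charnes–Cooper transformation: the linear fractional program
`sup { (γᵀx + a)/(αᵀx + b) : Ax ≤ β, αᵀx + b > 0, x ≥ 0 }` is equivalent to the
linear program `sup { γᵀy + a·t : Ay - βt ≤ 0, αᵀy + bt = 1, y ≥ 0, t > 0 }`,
via the bijection `x ↦ (x/(αᵀx+b), 1/(αᵀx+b))` with inverse `(y,t) ↦ y/t`. -/
theorem stmt13 {m n : ℕ} (A : Matrix (Fin m) (Fin n) ℝ) (β : Fin m → ℝ)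
    (γ α : Fin n → ℝ) (a b : ℝ) :
    let F : Set (Fin n → ℝ) :=
      {x | A.mulVec x ≤ β ∧ 0 < α ⬝ᵥ x + b ∧ 0 ≤ x}
    let G : Set ((Fin n → ℝ) × ℝ) :=
      {p | A.mulVec p.1 ≤ p.2 • β ∧ α ⬝ᵥ p.1 + b * p.2 = 1 ∧ 0 ≤ p.1 ∧ 0 < p.2}
    let φ : (Fin n → ℝ) → (Fin n → ℝ) × ℝ :=
      fun x => ((α ⬝ᵥ x + b)⁻¹ • x, (α ⬝ᵥ x + b)⁻¹)
    sSup ((fun x => (((γ ⬝ᵥ x + a) / (α ⬝ᵥ x + b) : ℝ) : EReal)) '' F)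
        = sSup ((fun p => ((γ ⬝ᵥ p.1 + a * p.2 : ℝ) : EReal)) '' G) ∧
      Set.BijOn φ F G ∧
      Set.InvOn (fun p : (Fin n → ℝ) × ℝ => p.2⁻¹ • p.1) φ F G := by
  intro F G φ
  have hbij : Set.BijOn φ F G := bijOn_transform A β α b
  refine ⟨?_, hbij, invOn_transform A β α b⟩
  rw [← hbij.image_eq, ← Set.image_comp]
  refine congrArg sSup (Set.image_congr fun x hx => ?_)
  exact congrArg _ (div_eq_dotProduct_transform γ α x a b hx.2.1.ne')
end

section
/- Let q : Fin 4 × Fin 4 → ℝ be nonnegative with total sum 1 in the strong surrogate type model, with ACE, γ, and observed functionals defined as usual. Then ACE satisfies the upper bounds U₄ = γ + P(Y=1,S=0|T=0) + 2·P(Y=0,S=1|T=0) and U₅ = γ + P(Y=0,S=1|T=0) + P(S=0|T=1): that is, ACE ≤ min(U₄, U₅). -/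
section TypeProportions

variable (q : Fin 4 × Fin 4 → ℝ)

theorem gam_add_pB_add_two_mul_pC_sub_ace :
    gam q + pB q + 2 * pC q - ace q =
      q (0, 1) + q (0, 3) + q (1, 2) + q (1, 3) + 2 * (q (2, 0) + q (2, 1) + q (3, 0))
        + q (3, 1) + q (3, 2) := by
  simp only [gam, pB, pC, ace]
  ring

theorem gam_add_pC_add_pE_sub_ace :
    gam q + pC q + pE q - ace q =
      q (0, 0) + 2 * q (0, 1) + q (0, 3) + 2 * q (2, 0) + 3 * q (2, 1) + q (2, 3)
        + q (3, 0) + q (3, 1) := by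
  simp only [gam, pC, pE, ace]
  ring

variable {q}

theorem ace_le_gam_add_pB_add_two_mul_pC (hq : ∀ p, 0 ≤ q p) :
    ace q ≤ gam q + pB q + 2 * pC q := by
  linarith [gam_add_pB_add_two_mul_pC_sub_ace q, hq (0, 1), hq (0, 3), hq (1, 2), hq (1, 3),
    hq (2, 0), hq (2, 1), hq (3, 0), hq (3, 1), hq (3, 2)]

theorem ace_le_gam_add_pC_add_pE (hq : ∀ p, 0 ≤ q p) :
    ace q ≤ gam q + pC q + pE q := by
  linarith [gam_add_pC_add_pE_sub_ace q, hq (0, 0), hq (0, 1), hq (0, 3), hq (2, 0), hq (2, 1),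
    hq (2, 3), hq (3, 0), hq (3, 1)]

end TypeProportions

theorem stmt15_general (q : Fin 4 × Fin 4 → ℝ) (hq : ∀ p, 0 ≤ q p) :
    ace q ≤ min (gam q + pB q + 2 * pC q) (gam q + pC q + pE q) :=
  le_min (ace_le_gam_add_pB_add_two_mul_pC hq) (ace_le_gam_add_pC_add_pE hq)

theorem stmt15 (q : Fin 4 × Fin 4 → ℝ) (hq : ∀ p, 0 ≤ q p)
    (hsum : ∑ p : Fin 4 × Fin 4, q p = 1) :
    ace q ≤ min (gam q + pB q + 2 * pC q) (gam q + pC q + pE q) :=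
  stmt15_general q hq
end

section
/- Let q : Fin 4 × Fin 4 → ℝ be nonnegative with total sum 1 in the strong surrogate type model. Then ACE = q(2,2)+q(1,1)−q(1,2)−q(2,1) satisfies ACE ≥ −P(Y=1,S=0|T=0) − P(S=0|T=1) and ACE ≥ −P(Y=1,S=1|T=0) − P(S=1|T=1), and symmetrically ACE ≤ P(Y=0,S=0|T=0) + P(S=0|T=1) and ACE ≤ P(Y=0,S=1|T=0) + P(S=1|T=1). -/
/-! Each bound drops the two nonnegative terms of one sign from `ace q` and dominates each of
the other two by an observed probability whose event contains that type (`1 - pE q` is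
`P(S=1 | T=1)`): types `(1, ·)` have `S_{T=0} = 0, S_{T=1} = 1` and types `(2, ·)` have
`S_{T=0} = 1, S_{T=1} = 0`; `Y_{S=0}` is `1` for `j = 2`, and `Y_{S=1}` is `1` for `j = 1`. -/

section TypeProportions

variable {q : Fin 4 × Fin 4 → ℝ}

theorem neg_sub_le_ace (hq : ∀ p, 0 ≤ q p) {a b : ℝ} (h₁₂ : q (1, 2) ≤ a)
    (h₂₁ : q (2, 1) ≤ b) : -a - b ≤ ace q := by
  unfold ace
  linarith [hq (1, 1), hq (2, 2)]

theorem ace_le_add (hq : ∀ p, 0 ≤ q p) {a b : ℝ} (h₁₁ : q (1, 1) ≤ a)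
    (h₂₂ : q (2, 2) ≤ b) : ace q ≤ a + b := by
  unfold ace
  linarith [hq (1, 2), hq (2, 1)]

theorem q_one_one_le_pA (hq : ∀ p, 0 ≤ q p) : q (1, 1) ≤ pA q := by
  unfold pA
  linarith [hq (0, 0), hq (0, 1), hq (1, 0)]

theorem q_one_two_le_pB (hq : ∀ p, 0 ≤ q p) : q (1, 2) ≤ pB q := by
  unfold pB
  linarith [hq (0, 2), hq (0, 3), hq (1, 3)]

theorem q_two_two_le_pC (hq : ∀ p, 0 ≤ q p) : q (2, 2) ≤ pC q := by
  unfold pC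
  linarith [hq (2, 0), hq (3, 0), hq (3, 2)]

theorem q_two_one_le_pD (hq : ∀ p, 0 ≤ q p) : q (2, 1) ≤ pD q := by
  unfold pD
  linarith [hq (2, 3), hq (3, 1), hq (3, 3)]

theorem q_two_le_pE (hq : ∀ p, 0 ≤ q p) (j : Fin 4) : q (2, j) ≤ pE q := by
  unfold pE
  fin_cases j <;>
    simp only [Fin.zero_eta, Fin.mk_one, Fin.reduceFinMk] <;>
    linarith [hq (0, 0), hq (0, 1), hq (0, 2), hq (0, 3),
      hq (2, 0), hq (2, 1), hq (2, 2), hq (2, 3)]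

theorem q_one_le_one_sub_pE (hq : ∀ p, 0 ≤ q p) (hsum : ∑ p : Fin 4 × Fin 4, q p = 1)
    (j : Fin 4) : q (1, j) ≤ 1 - pE q := by
  simp only [Fintype.sum_prod_type, Fin.sum_univ_four] at hsum
  unfold pE
  fin_cases j <;>
    simp only [Fin.zero_eta, Fin.mk_one, Fin.reduceFinMk] <;>
    linarith [hq (1, 0), hq (1, 1), hq (1, 2), hq (1, 3),
      hq (3, 0), hq (3, 1), hq (3, 2), hq (3, 3)]

end TypeProportions

theorem stmt16 (q : Fin 4 × Fin 4 → ℝ) (hq : ∀ p, 0 ≤ q p)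
    (hsum : ∑ p : Fin 4 × Fin 4, q p = 1) :
    (ace q ≥ -pB q - pE q) ∧ (ace q ≥ -pD q - (1 - pE q)) ∧
    (ace q ≤ pA q + pE q) ∧ (ace q ≤ pC q + (1 - pE q)) :=
  ⟨neg_sub_le_ace hq (q_one_two_le_pB hq) (q_two_le_pE hq 1),
    (neg_sub_comm (pD q) _).trans_le <|
      neg_sub_le_ace hq (q_one_le_one_sub_pE hq hsum 2) (q_two_one_le_pD hq),
    ace_le_add hq (q_one_one_le_pA hq) (q_two_le_pE hq 2),
    (ace_le_add hq (q_one_le_one_sub_pE hq hsum 1) (q_two_two_le_pC hq)).trans_eq (add_comm _ _)⟩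
end
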